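/- arXiv:2110.14321 — 2 statements merged into one kernel-verified Lean document; each statement's English description precedes it below -/
import Mathlib

section
/- Let the real numbers λ_1,…,λ_n be linearly independent over the field of rational numbers, let c_1,…,c_n be complex numbers, let f(x)=∑_{k=1}^n c_k e^{iλ_k x}, and let g(x)=∑_{k=1}^n |c_k| e^{iλ_k x}. Then sup_{x∈ℝ} |f(x)| = sup_{x∈ℝ} |g(x)| and inf_{x∈ℝ} |f(x)| = inf_{x∈ℝ} |g(x)|; that is, the quantities r = inf|f| and R = sup|f| depend only on the moduli |c_1|,…,|c_n|. -/
/-!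
Write `c_k = |c_k| u_k` with `|u_k| = 1`. Then `|f(x)|` and `|g(x)|` are the norms of
`∑ |c_k| u_k e^{iλ_k x}` and `∑ |c_k| e^{iλ_k x}`, and a norm does not see a common unit factor.
So it suffices that for every target `(z_k)` on the torus some `x` and some unit `w` make all
`e^{iλ_k x}` close to `w z_k`: then `range |f|` and `range |g|` have the same closure, and a set of
reals has the same supremum and infimum as its closure.

This weak form of Kronecker's theorem follows from Bohr's argument. For unimodular `w_k`,
`ψ(x) = ∑ w_k e^{iλ_k x}` has `sup |ψ| = n`: the power `ψ^m` is an exponential sum over the sums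
of `m` of the `λ_k`, and by independence the `m`-tuples with the same frequency carry the same
coefficient. By Parseval the mean of `|ψ|^{2m}` is therefore the number of pairs of `m`-tuples with
equal frequency, which by Cauchy–Schwarz is at least `n^{2m} / (m+1)^n`; this beats `r^{2m}` for
large `m` whenever `r < n`. Finally, if `|∑ u_k| > n - δ` with all `|u_k| = 1`, then every `u_k`
lies within `√(2δ)` of the direction of the sum.
-/

open Complex ComplexConjugate Finset Filter Topology

lemma norm_exp_I_mul_ofReal_mul_ofReal (ν x : ℝ) : ‖cexp (I * ν * x)‖ = 1 := by
  rw [mul_assoc, ← ofReal_mul]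
  exact norm_exp_I_mul_ofReal _

lemma tendsto_mean_exp (ν : ℝ) :
    Tendsto (fun T : ℝ => (T : ℂ)⁻¹ * ∫ x in (0 : ℝ)..T, cexp (I * ν * x)) atTop
      (𝓝 (if ν = 0 then 1 else 0)) := by
  split_ifs with hν
  · subst hν
    refine tendsto_const_nhds.congr' ?_
    filter_upwards [eventually_ne_atTop 0] with T hT
    simp [hT]
  · have hIν : I * ν ≠ 0 := by simp [hν]
    have hbound : ∀ T : ℝ, ‖∫ x in (0 : ℝ)..T, cexp (I * ν * x)‖ ≤ 2 / |ν| := by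
      intro T
      rw [integral_exp_mul_complex hIν, norm_div, norm_mul, norm_I, one_mul, norm_real,
        Real.norm_eq_abs]
      gcongr
      calc _ ≤ ‖cexp (I * ν * T)‖ + ‖cexp (I * ν * (0 : ℝ))‖ := norm_sub_le _ _
        _ = 2 := by rw [norm_exp_I_mul_ofReal_mul_ofReal, norm_exp_I_mul_ofReal_mul_ofReal]; norm_num
    refine squeeze_zero_norm' ?_ (by simpa using tendsto_inv_atTop_zero.mul_const (2 / |ν|))
    filter_upwards [eventually_gt_atTop 0] with T hT
    rw [norm_mul, norm_inv, norm_real, Real.norm_of_nonneg hT.le]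
    exact mul_le_mul_of_nonneg_left (hbound T) (inv_nonneg.mpr hT.le)

lemma mean_le_of_forall_le {g : ℝ → ℝ} (hg : Continuous g) {B : ℝ} (h : ∀ x, g x ≤ B) {T : ℝ}
    (hT : 0 < T) : T⁻¹ * ∫ x in (0 : ℝ)..T, g x ≤ B := by
  have := intervalIntegral.integral_mono_on hT.le (hg.intervalIntegrable 0 T)
    (intervalIntegrable_const (μ := MeasureTheory.volume)) fun x _ => h x
  rw [intervalIntegral.integral_const, smul_eq_mul, sub_zero] at this
  rw [inv_mul_le_iff₀ hT]
  linarith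

section ExpSum

variable {ι : Type*} [Fintype ι]

noncomputable def expSum (c : ι → ℂ) (lam : ι → ℝ) (x : ℝ) : ℂ := ∑ i, c i * cexp (I * lam i * x)

lemma continuous_expSum (c : ι → ℂ) (lam : ι → ℝ) : Continuous (expSum c lam) := by
  unfold expSum
  fun_prop

lemma ofReal_norm_expSum_sq (c : ι → ℂ) (lam : ι → ℝ) (x : ℝ) :
    ((‖expSum c lam x‖ ^ 2 : ℝ) : ℂ) =
      ∑ i, ∑ j, c i * conj (c j) * cexp (I * ↑(lam i - lam j) * x) := by
  rw [ofReal_pow, ← mul_conj', expSum, map_sum, sum_mul_sum]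
  refine sum_congr rfl fun i _ => sum_congr rfl fun j _ => ?_
  rw [map_mul, ← exp_conj, mul_mul_mul_comm, ← exp_add]
  congr 2
  simp only [map_mul, conj_I, conj_ofReal]
  push_cast
  ring

lemma tendsto_mean_norm_expSum_sq (c : ι → ℂ) {lam : ι → ℝ} (hlam : Function.Injective lam) :
    Tendsto (fun T : ℝ => T⁻¹ * ∫ x in (0 : ℝ)..T, ‖expSum c lam x‖ ^ 2) atTop
      (𝓝 (∑ i, ‖c i‖ ^ 2)) := by
  classical
  rw [← tendsto_ofReal_iff]
  have hmean : ∀ T : ℝ, ((T⁻¹ * ∫ x in (0 : ℝ)..T, ‖expSum c lam x‖ ^ 2 : ℝ) : ℂ) =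
      ∑ i, ∑ j, c i * conj (c j) *
        ((T : ℂ)⁻¹ * ∫ x in (0 : ℝ)..T, cexp (I * ↑(lam i - lam j) * x)) := by
    intro T
    simp_rw [ofReal_mul, ofReal_inv, ← intervalIntegral.integral_ofReal, ofReal_norm_expSum_sq]
    rw [intervalIntegral.integral_finsetSum, mul_sum]
    · refine sum_congr rfl fun i _ => ?_
      rw [intervalIntegral.integral_finsetSum, mul_sum]
      · refine sum_congr rfl fun j _ => ?_
        rw [intervalIntegral.integral_const_mul]
        ring
      · intro j _
        exact (by fun_prop : Continuous _).intervalIntegrable _ _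
    · intro i _
      exact (by fun_prop : Continuous _).intervalIntegrable _ _
  have hlim : ∑ i, ∑ j, c i * conj (c j) * (if lam i - lam j = 0 then 1 else 0) =
      ((∑ i, ‖c i‖ ^ 2 : ℝ) : ℂ) := by
    push_cast
    refine sum_congr rfl fun i _ => ?_
    simp_rw [sub_eq_zero, hlam.eq_iff, mul_ite, mul_one, mul_zero, sum_ite_eq, mem_univ, if_true,
      mul_conj']
  have key := tendsto_finsetSum (univ : Finset ι) fun i _ => tendsto_finsetSum univ fun j _ =>
    (tendsto_mean_exp (lam i - lam j)).const_mul (c i * conj (c j))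
  rw [hlim] at key
  exact key.congr fun T => (hmean T).symm

lemma expSum_eq_expSum_image (c : ι → ℂ) (lam : ι → ℝ) (x : ℝ) :
    expSum c lam x =
      expSum (fun ν : univ.image lam => ∑ i with lam i = ν, c i) (↑) x := by
  rw [expSum, expSum,
    sum_coe_sort (univ.image lam) fun ν => (∑ i with lam i = ν, c i) * cexp (I * ν * x),
    ← sum_fiberwise_of_maps_to (g := lam) fun i _ => mem_image_of_mem lam (mem_univ i)]
  refine sum_congr rfl fun ν _ => ?_
  rw [sum_mul]
  exact sum_congr rfl fun i hi => by rw [(mem_filter.mp hi).2]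

lemma pow_expSum (w : ι → ℂ) (lam : ι → ℝ) (m : ℕ) (x : ℝ) :
    expSum w lam x ^ m =
      expSum (fun p : Fin m → ι => ∏ t, w (p t)) (fun p => ∑ t, lam (p t)) x := by
  rw [expSum, Fintype.sum_pow]
  refine sum_congr rfl fun p _ => ?_
  rw [prod_mul_distrib, ← exp_sum]
  push_cast
  simp_rw [mul_sum, sum_mul]

end ExpSum

section Counting

variable {ι : Type*} [Fintype ι]

@[to_additive]
lemma prod_comp_eq_prod_pow_card_fiber {α M : Type*} [Fintype α] [DecidableEq ι] [CommMonoid M]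
    (p : α → ι) (h : ι → M) : ∏ t, h (p t) = ∏ i, h i ^ #{t | p t = i} := by
  rw [← prod_fiberwise' univ p h]
  exact prod_congr rfl fun i _ => prod_const _

lemma sq_card_le_card_image_mul_sum_sq {α β : Type*} [Fintype α] [DecidableEq β] (φ : α → β) :
    Fintype.card α ^ 2 ≤ #(univ.image φ) * ∑ b ∈ univ.image φ, #{a | φ a = b} ^ 2 := by
  rw [← card_univ, card_eq_sum_card_image φ univ]
  exact sq_sum_le_card_mul_sum_sq

lemma card_image_sum_comp_le [DecidableEq ι] (lam : ι → ℝ) (m : ℕ) :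
    #(univ.image fun p : Fin m → ι => ∑ t, lam (p t)) ≤ (m + 1) ^ Fintype.card ι := by
  calc _ ≤ #(univ.image fun a : ι → Fin (m + 1) => ∑ i, (a i : ℕ) • lam i) := by
        refine card_le_card fun S hS => ?_
        obtain ⟨p, -, rfl⟩ := mem_image.mp hS
        refine mem_image.mpr ⟨fun i => ⟨#{t | p t = i}, Nat.lt_succ_of_le ?_⟩, mem_univ _, ?_⟩
        · exact (card_le_univ _).trans (by simp)
        · simp [sum_comp_eq_sum_nsmul_card_fiber]
    _ ≤ _ := card_image_le.trans (by simp)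

lemma prod_eq_prod_of_sum_eq_sum {α M : Type*} [Fintype α] [CommMonoid M] {lam : ι → ℝ}
    (hlam : Function.Injective fun a : ι → ℕ => ∑ i, (a i : ℝ) * lam i) {p q : α → ι}
    (h : ∑ t, lam (p t) = ∑ t, lam (q t)) (w : ι → M) : ∏ t, w (p t) = ∏ t, w (q t) := by
  classical
  simp_rw [sum_comp_eq_sum_nsmul_card_fiber, nsmul_eq_mul] at h
  rw [prod_comp_eq_prod_pow_card_fiber, prod_comp_eq_prod_pow_card_fiber]
  exact prod_congr rfl fun i _ => congrArg (w i ^ ·) (congrFun (hlam h) i)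

lemma norm_sum_fiber_eq_card [DecidableEq ι] {m : ℕ} {lam : ι → ℝ}
    (hlam : Function.Injective fun a : ι → ℕ => ∑ i, (a i : ℝ) * lam i)
    {w : ι → ℂ} (hw : ∀ i, ‖w i‖ = 1) (S : ℝ) :
    ‖∑ q : Fin m → ι with ∑ t, lam (q t) = S, ∏ t, w (q t)‖ =
      #{q : Fin m → ι | ∑ t, lam (q t) = S} := by
  rcases eq_empty_or_nonempty {q : Fin m → ι | ∑ t, lam (q t) = S} with h | ⟨q₀, hq₀⟩
  · simp [h]
  · rw [sum_congr rfl fun q hq => prod_eq_prod_of_sum_eq_sum hlam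
      ((mem_filter.mp hq).2.trans (mem_filter.mp hq₀).2.symm) w, sum_const, RCLike.norm_nsmul ℝ,
      norm_prod]
    simp [hw]

end Counting

section Bohr

variable {ι : Type*} [Fintype ι] {lam : ι → ℝ}
  (hlam : Function.Injective fun a : ι → ℕ => ∑ i, (a i : ℝ) * lam i)
  {w : ι → ℂ} (hw : ∀ i, ‖w i‖ = 1)
include hlam hw

lemma card_pow_le_of_norm_expSum_le {r : ℝ} (hr : ∀ x, ‖expSum w lam x‖ ≤ r) (m : ℕ) :
    (Fintype.card ι : ℝ) ^ (2 * m) ≤ ((m : ℝ) + 1) ^ Fintype.card ι * r ^ (2 * m) := by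
  classical
  set S : (Fin m → ι) → ℝ := fun p => ∑ t, lam (p t)
  set a : univ.image S → ℂ := fun ν => ∑ p with S p = ν, ∏ t, w (p t)
  have hmean : ∑ ν, ‖a ν‖ ^ 2 ≤ r ^ (2 * m) := by
    refine le_of_tendsto (tendsto_mean_norm_expSum_sq a Subtype.val_injective) ?_
    filter_upwards [eventually_gt_atTop 0] with T hT
    refine mean_le_of_forall_le ((continuous_expSum a _).norm.pow 2) (fun x => ?_) hT
    change ‖expSum a _ x‖ ^ 2 ≤ _
    rw [← expSum_eq_expSum_image, ← pow_expSum, norm_pow, ← pow_mul, mul_comm]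
    exact pow_le_pow_left₀ (norm_nonneg _) (hr x) _
  calc (Fintype.card ι : ℝ) ^ (2 * m) = (Fintype.card (Fin m → ι) : ℝ) ^ 2 := by
        rw [Fintype.card_fun, Fintype.card_fin]; push_cast; ring
    _ ≤ #(univ.image S) * ∑ ν ∈ univ.image S, (#{p | S p = ν} : ℝ) ^ 2 := by
        exact_mod_cast sq_card_le_card_image_mul_sum_sq S
    _ = #(univ.image S) * ∑ ν, ‖a ν‖ ^ 2 := by
        rw [← sum_coe_sort]
        exact congrArg _ (sum_congr rfl fun ν _ => by rw [norm_sum_fiber_eq_card hlam hw])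
    _ ≤ ((m : ℝ) + 1) ^ Fintype.card ι * r ^ (2 * m) := by
        gcongr
        exact_mod_cast card_image_sum_comp_le lam m

theorem exists_lt_norm_expSum {r : ℝ} (hr : r < Fintype.card ι) :
    ∃ x, r < ‖expSum w lam x‖ := by
  by_contra! h
  set N := Fintype.card ι
  have hr0 : 0 ≤ r := (norm_nonneg _).trans (h 0)
  have hN : (0 : ℝ) < N := hr0.trans_lt hr
  set q := (r / N) ^ 2
  have hq : |q| < 1 := by
    rw [abs_of_nonneg (by positivity)]
    exact pow_lt_one₀ (by positivity) ((div_lt_one hN).mpr hr) two_ne_zero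
  have hlim : Tendsto (fun m : ℕ => 2 ^ N * ((m : ℝ) ^ N * q ^ m)) atTop (𝓝 0) := by
    simpa using (tendsto_pow_const_mul_const_pow_of_abs_lt_one N hq).const_mul (2 ^ N)
  obtain ⟨m, hm, hm1⟩ := ((hlim.eventually (gt_mem_nhds one_pos)).and
    (eventually_ge_atTop 1)).exists
  have hbound : (N : ℝ) ^ (2 * m) ≤ 2 ^ N * ((m : ℝ) ^ N * q ^ m) * N ^ (2 * m) :=
    calc (N : ℝ) ^ (2 * m) ≤ ((m : ℝ) + 1) ^ N * r ^ (2 * m) :=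
          card_pow_le_of_norm_expSum_le hlam hw h m
      _ ≤ (2 * m) ^ N * r ^ (2 * m) := by
          gcongr
          have : (1 : ℝ) ≤ m := by exact_mod_cast hm1
          linarith
      _ = _ := by
          simp only [q]
          rw [div_pow, div_pow, ← pow_mul, ← pow_mul, mul_pow]
          field_simp
  have : 1 ≤ 2 ^ N * ((m : ℝ) ^ N * q ^ m) :=
    le_of_mul_le_mul_right (by simpa using hbound) (by positivity)
  linarith

end Bohr

section Kronecker

variable {ι : Type*} [Fintype ι]

lemma exists_forall_norm_sub_sq_lt {u : ι → ℂ} (hu : ∀ i, ‖u i‖ = 1) {δ : ℝ}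
    (h : Fintype.card ι - δ < ‖∑ i, u i‖) : ∃ w : ℂ, ‖w‖ = 1 ∧ ∀ i, ‖u i - w‖ ^ 2 < 2 * δ := by
  set s := ∑ i, u i
  set w := cexp (arg s * I)
  have hw : ‖w‖ = 1 := norm_exp_ofReal_mul_I _
  refine ⟨w, hw, fun i => ?_⟩
  have hre : ∀ j, 0 ≤ 1 - (u j * conj w).re := fun j => by
    have := re_le_norm (u j * conj w)
    rw [norm_mul, RCLike.norm_conj, hu, hw, one_mul] at this
    linarith
  have hs : s * conj w = ‖s‖ := by
    conv_lhs => rw [← norm_mul_exp_arg_mul_I s]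
    rw [mul_assoc, mul_conj', hw, ofReal_one, one_pow, mul_one]
  have hsum : ∑ j, (1 - (u j * conj w).re) = Fintype.card ι - ‖s‖ := by
    rw [sum_sub_distrib, ← re_sum, ← sum_mul, hs]
    simp
  have hsq : ‖u i - w‖ ^ 2 = 2 * (1 - (u i * conj w).re) := by
    rw [← normSq_eq_norm_sq, normSq_sub, normSq_eq_norm_sq, normSq_eq_norm_sq, hu, hw]
    ring
  have := single_le_sum (fun j _ => hre j) (mem_univ i)
  rw [hsq]
  linarith

theorem exists_norm_exp_sub_mul_lt {lam : ι → ℝ}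
    (hlam : Function.Injective fun a : ι → ℕ => ∑ i, (a i : ℝ) * lam i) {z : ι → ℂ}
    (hz : ∀ i, ‖z i‖ = 1) {ε : ℝ} (hε : 0 < ε) :
    ∃ (x : ℝ) (w : ℂ), ‖w‖ = 1 ∧ ∀ i, ‖cexp (I * lam i * x) - w * z i‖ < ε := by
  obtain ⟨x, hx⟩ := exists_lt_norm_expSum hlam (w := fun i => conj (z i)) (by simp [hz])
    (r := Fintype.card ι - ε ^ 2 / 2) (by linarith [pow_pos hε 2])
  obtain ⟨w, hw, hclose⟩ := exists_forall_norm_sub_sq_lt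
    (u := fun i => conj (z i) * cexp (I * lam i * x))
    (by simp [hz, norm_exp_I_mul_ofReal_mul_ofReal]) hx
  refine ⟨x, w, hw, fun i => ?_⟩
  have hfactor : cexp (I * lam i * x) - w * z i =
      z i * (conj (z i) * cexp (I * lam i * x) - w) := by
    rw [mul_sub, ← mul_assoc, mul_conj', hz, ofReal_one, one_pow, one_mul, mul_comm w]
  rw [hfactor, norm_mul, hz, one_mul]
  exact lt_of_pow_lt_pow_left₀ 2 hε.le (by linarith [hclose i])

end Kronecker

section Closure

variable {ι : Type*} [Fintype ι] {lam : ι → ℝ}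
  (hlam : Function.Injective fun a : ι → ℕ => ∑ i, (a i : ℝ) * lam i)
  (c : ι → ℂ) {u : ι → ℂ} (hu : ∀ i, ‖u i‖ = 1)
include hlam hu

lemma norm_expSum_mul_mem_closure (x : ℝ) :
    ‖expSum (u * c) lam x‖ ∈ closure (Set.range fun y => ‖expSum c lam y‖) := by
  rw [Metric.mem_closure_range_iff]
  intro ε hε
  set C := ∑ i, ‖c i‖
  have hC : 0 ≤ C := sum_nonneg fun i _ => norm_nonneg _
  obtain ⟨y, w, hw, hy⟩ := exists_norm_exp_sub_mul_lt hlam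
    (z := fun i => u i * cexp (I * lam i * x)) (by simp [hu, norm_exp_I_mul_ofReal_mul_ofReal])
    (ε := ε / (C + 1)) (by positivity)
  refine ⟨y, ?_⟩
  have hdiff : expSum c lam y - w * expSum (u * c) lam x =
      ∑ i, c i * (cexp (I * lam i * y) - w * (u i * cexp (I * lam i * x))) := by
    simp only [expSum, mul_sum, ← sum_sub_distrib, Pi.mul_apply]
    exact sum_congr rfl fun i _ => by ring
  calc dist ‖expSum (u * c) lam x‖ ‖expSum c lam y‖
      = |‖w * expSum (u * c) lam x‖ - ‖expSum c lam y‖| := by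
        rw [Real.dist_eq, norm_mul, hw, one_mul]
    _ ≤ ‖expSum c lam y - w * expSum (u * c) lam x‖ := by
        rw [norm_sub_rev]
        exact abs_norm_sub_norm_le _ _
    _ ≤ ∑ i, ‖c i‖ * (ε / (C + 1)) := by
        rw [hdiff]
        refine (norm_sum_le _ _).trans (sum_le_sum fun i _ => ?_)
        rw [norm_mul]
        exact mul_le_mul_of_nonneg_left (hy i).le (norm_nonneg _)
    _ < ε := by
        rw [← sum_mul, mul_div_assoc', div_lt_iff₀ (by positivity)]
        nlinarith

lemma closure_range_norm_expSum_mul :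
    closure (Set.range fun x => ‖expSum (u * c) lam x‖) =
      closure (Set.range fun y => ‖expSum c lam y‖) := by
  refine (closure_minimal (Set.range_subset_iff.mpr (norm_expSum_mul_mem_closure hlam c hu))
    isClosed_closure).antisymm (closure_minimal (Set.range_subset_iff.mpr fun y => ?_)
    isClosed_closure)
  have hcu : star u * (u * c) = c := by
    ext i
    rw [Pi.mul_apply, Pi.mul_apply, Pi.star_apply, ← mul_assoc, star_def, conj_mul', hu,
      ofReal_one, one_pow, one_mul]
  have := norm_expSum_mul_mem_closure hlam (u * c) (u := star u) (by simp [hu]) y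
  rwa [hcu] at this

end Closure

lemma Real.sSup_closure (s : Set ℝ) : sSup (closure s) = sSup s := by
  rcases s.eq_empty_or_nonempty with rfl | hne
  · simp
  by_cases hb : BddAbove s
  · exact ((isLUB_congr (upperBounds_closure s)).mpr (isLUB_csSup hne hb)).csSup_eq hne.closure
  · rw [Real.sSup_of_not_bddAbove hb, Real.sSup_of_not_bddAbove (mt bddAbove_closure.mp hb)]

lemma Real.sInf_closure (s : Set ℝ) : sInf (closure s) = sInf s := by
  rcases s.eq_empty_or_nonempty with rfl | hne
  · simp
  by_cases hb : BddBelow s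
  · exact ((isGLB_congr (lowerBounds_closure s)).mpr (isGLB_csInf hne hb)).csInf_eq hne.closure
  · rw [Real.sInf_of_not_bddBelow hb, Real.sInf_of_not_bddBelow (mt bddBelow_closure.mp hb)]

lemma injective_sum_natCast_mul {ι : Type*} [Fintype ι] {lam : ι → ℝ}
    (h : ∀ r : ι → ℚ, ∑ i, (r i : ℝ) * lam i = 0 → ∀ i, r i = 0) :
    Function.Injective fun a : ι → ℕ => ∑ i, (a i : ℝ) * lam i := by
  intro a b hab
  funext i
  have hrel : ∑ k, ((a k - b k : ℚ) : ℝ) * lam k = 0 := by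
    push_cast
    simp only [sub_mul, sum_sub_distrib]
    exact sub_eq_zero.mpr hab
  exact_mod_cast sub_eq_zero.mp (h _ hrel i)

theorem stmt_3 (n : ℕ) (lam : Fin n → ℝ) (c : Fin n → ℂ)
    (hindep : ∀ r : Fin n → ℚ, (∑ k, (r k : ℝ) * lam k) = 0 → ∀ k, r k = 0)
    (f g : ℝ → ℂ)
    (hf : ∀ x : ℝ, f x = ∑ k, c k * Complex.exp (Complex.I * (lam k : ℂ) * (x : ℂ)))
    (hg : ∀ x : ℝ, g x = ∑ k, (‖c k‖ : ℂ) * Complex.exp (Complex.I * (lam k : ℂ) * (x : ℂ))) :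
    (⨆ x : ℝ, ‖f x‖) = (⨆ x : ℝ, ‖g x‖) ∧
    (⨅ x : ℝ, ‖f x‖) = (⨅ x : ℝ, ‖g x‖) := by
  set u : Fin n → ℂ := fun k => cexp (arg (c k) * I)
  have hf' : f = expSum (u * fun k => (‖c k‖ : ℂ)) lam := by
    funext x
    rw [hf, expSum]
    exact sum_congr rfl fun k _ => by rw [Pi.mul_apply, mul_comm (u k), norm_mul_exp_arg_mul_I]
  have hg' : g = expSum (fun k => (‖c k‖ : ℂ)) lam := funext hg
  have hcl := closure_range_norm_expSum_mul (injective_sum_natCast_mul hindep)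
    (fun k => (‖c k‖ : ℂ)) (u := u) fun k => norm_exp_ofReal_mul_I _
  rw [← hf', ← hg'] at hcl
  constructor
  · rw [iSup, iSup, ← Real.sSup_closure, hcl, Real.sSup_closure]
  · rw [iInf, iInf, ← Real.sInf_closure, hcl, Real.sInf_closure]
end

section
/- Let the real numbers λ_1,…,λ_n be linearly independent over the field of rational numbers, let c_1,…,c_n be complex numbers, let f(x)=∑_{k=1}^n c_k e^{iλ_k x}, and assume that r = inf_{x∈ℝ} |f(x)| > 0. Then r ≥ min_{ε∈{−1,1}^n} |∑_{k=1}^n ε_k |c_k||. -/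
/-!
If some `|c_j|` is at least the sum of the others, the reverse triangle inequality gives
`|f| ≥ 2|c_j| - ∑ |c_k|`, and this number is a partition value. Otherwise the `|c_k|` are the
sides of a closed polygon, so `∑ c_k t_k = 0` for suitable unit complex numbers `t_k`; by
Kronecker's theorem the independent frequencies let `x` bring every `e^{iλ_k x}` close to `t_k`
at once, hence `inf |f| = 0`, which is excluded by `r > 0`.

Kronecker's theorem is proved by Bohr's averaging argument. If every `x` kept some
`e^{iλ_k x}` at distance `≥ ε` from `t_k`, the trigonometric polynomial
`∏_k ((1 + conj t_k e^{iλ_k x}) / 2)^N` would have squared modulus at most `(1 - ε²/4)^N`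
everywhere. Its frequencies `∑ a_k λ_k` are pairwise distinct, so its mean square is the sum of
its squared coefficients, `(binom(2N, N) / 4^N)^n ≥ (2N + 1)^{-n}`, and this contradicts the
bound for large `N`.
-/

/-- The set of values `|∑ εₖ aₖ|` over all sign choices `εₖ ∈ {-1, 1}`;
its infimum is the partition minimum of the numbers `a k`. -/
def partitionValues (n : ℕ) (a : Fin n → ℝ) : Set ℝ :=
  {m | ∃ ε : Fin n → ℝ, (∀ k, ε k = 1 ∨ ε k = -1) ∧ m = |∑ k, ε k * a k|}

open Complex ComplexConjugate Finset Filter Topology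

section

variable {ι : Type*}

theorem norm_exp_I_mul_ofReal_mul (l x : ℝ) : ‖exp (I * l * x)‖ = 1 := by
  rw [mul_assoc, ← ofReal_mul, norm_exp_I_mul_ofReal]

theorem tendsto_average_exp_I_mul (μ : ℝ) :
    Tendsto (fun T : ℝ => (T : ℂ)⁻¹ * ∫ x in (0 : ℝ)..T, exp (I * μ * x)) atTop
      (𝓝 (if μ = 0 then 1 else 0)) := by
  rcases eq_or_ne μ 0 with rfl | hμ
  · refine tendsto_const_nhds.congr' ?_
    filter_upwards [eventually_ne_atTop (0 : ℝ)] with T hT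
    simp [ofReal_ne_zero.mpr hT]
  · have hIμ : I * μ ≠ 0 := mul_ne_zero I_ne_zero (ofReal_ne_zero.mpr hμ)
    rw [if_neg hμ]
    refine Tendsto.zero_mul_isBoundedUnder_le ?_ (isBoundedUnder_of ⟨2 / ‖I * μ‖, fun T => ?_⟩)
    · simpa only [ofReal_zero, Function.comp_def, ofReal_inv] using
        (continuous_ofReal.tendsto 0).comp tendsto_inv_atTop_zero
    · rw [Function.comp_apply, integral_exp_mul_complex hIμ]
      simp only [ofReal_zero, mul_zero, exp_zero, norm_div]
      gcongr
      calc ‖exp (I * μ * T) - 1‖ ≤ ‖exp (I * μ * T)‖ + ‖(1 : ℂ)‖ := norm_sub_le _ _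
        _ = 2 := by rw [norm_exp_I_mul_ofReal_mul, norm_one]; norm_num

theorem norm_sq_sum_mul_exp_I_mul (s : Finset ι) (μ : ι → ℝ) (c : ι → ℂ) (x : ℝ) :
    ((‖∑ i ∈ s, c i * exp (I * μ i * x)‖ ^ 2 : ℝ) : ℂ) =
      ∑ i ∈ s, ∑ j ∈ s, c i * conj (c j) * exp (I * (μ i - μ j : ℝ) * x) := by
  rw [ofReal_pow, ← mul_conj', map_sum, sum_mul_sum]
  refine sum_congr rfl fun i _ => sum_congr rfl fun j _ => ?_
  rw [map_mul, ← exp_conj, mul_mul_mul_comm, ← exp_add]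
  congr 2
  simp only [map_mul, conj_I, conj_ofReal]
  push_cast
  ring

theorem tendsto_average_norm_sum_mul_exp_I_mul_sq (s : Finset ι) {μ : ι → ℝ}
    (hμ : Set.InjOn μ s) (c : ι → ℂ) :
    Tendsto (fun T : ℝ => (T : ℂ)⁻¹ *
        ∫ x in (0 : ℝ)..T, ((‖∑ i ∈ s, c i * exp (I * μ i * x)‖ ^ 2 : ℝ) : ℂ))
      atTop (𝓝 ((∑ i ∈ s, ‖c i‖ ^ 2 : ℝ) : ℂ)) := by
  classical
  have hcont : ∀ ν : ℝ, Continuous fun x : ℝ => exp (I * ν * x) := by fun_prop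
  have hint : ∀ T : ℝ,
      (∫ x in (0 : ℝ)..T, ((‖∑ i ∈ s, c i * exp (I * μ i * x)‖ ^ 2 : ℝ) : ℂ)) =
        ∑ i ∈ s, ∑ j ∈ s, c i * conj (c j) *
          ∫ x in (0 : ℝ)..T, exp (I * (μ i - μ j : ℝ) * x) := fun T => by
    simp only [norm_sq_sum_mul_exp_I_mul]
    rw [intervalIntegral.integral_finsetSum fun i _ => ?_]
    · refine sum_congr rfl fun i _ => ?_
      rw [intervalIntegral.integral_finsetSum fun j _ => ?_]
      · exact sum_congr rfl fun j _ => intervalIntegral.integral_const_mul _ _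
      · exact ((hcont _).const_mul _).intervalIntegrable _ _
    · exact (continuous_finsetSum _ fun j _ => (hcont _).const_mul _).intervalIntegrable _ _
  have hdiag : ∀ i ∈ s, ∑ j ∈ s, c i * conj (c j) * (if μ i - μ j = 0 then 1 else 0) =
      ((‖c i‖ ^ 2 : ℝ) : ℂ) := fun i hi => by
    have hiff : ∀ j ∈ s, (μ i - μ j = 0 ↔ i = j) := fun j hj =>
      sub_eq_zero.trans ⟨fun h => hμ hi hj h, fun h => h ▸ rfl⟩
    rw [sum_congr rfl fun j hj => by
      rw [if_congr (hiff j hj) rfl rfl, mul_ite, mul_one, mul_zero], sum_ite_eq, if_pos hi,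
      mul_conj', ofReal_pow]
  have h := tendsto_finsetSum s fun i _ => tendsto_finsetSum s fun j _ =>
    (tendsto_average_exp_I_mul (μ i - μ j)).const_mul (c i * conj (c j))
  rw [sum_congr rfl hdiag, ← ofReal_sum] at h
  refine h.congr fun T => ?_
  rw [hint, mul_sum]
  exact sum_congr rfl fun i _ => by rw [mul_sum]; exact sum_congr rfl fun j _ => by ring

theorem sum_norm_sq_le_of_forall_norm_sum_mul_exp_I_mul_sq_le (s : Finset ι)
    {μ : ι → ℝ} (hμ : Set.InjOn μ s) (c : ι → ℂ) {B : ℝ}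
    (hB : ∀ x : ℝ, ‖∑ i ∈ s, c i * exp (I * μ i * x)‖ ^ 2 ≤ B) :
    ∑ i ∈ s, ‖c i‖ ^ 2 ≤ B := by
  have hbound : ∀ᶠ T : ℝ in atTop, ‖(T : ℂ)⁻¹ *
      ∫ x in (0 : ℝ)..T, ((‖∑ i ∈ s, c i * exp (I * μ i * x)‖ ^ 2 : ℝ) : ℂ)‖ ≤ B := by
    filter_upwards [eventually_gt_atTop (0 : ℝ)] with T hT
    have h := intervalIntegral.norm_integral_le_of_norm_le_const (a := 0) (b := T) (C := B)
      (f := fun x => ((‖∑ i ∈ s, c i * exp (I * μ i * x)‖ ^ 2 : ℝ) : ℂ)) fun x _ => by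
        rw [norm_real, Real.norm_of_nonneg (by positivity)]; exact hB x
    rw [sub_zero, abs_of_pos hT] at h
    rw [norm_mul, norm_inv, norm_real, Real.norm_of_nonneg hT.le]
    calc T⁻¹ * _ ≤ T⁻¹ * (B * T) := by gcongr
      _ = B := by field_simp
  have h := le_of_tendsto (tendsto_average_norm_sum_mul_exp_I_mul_sq s hμ c).norm hbound
  rwa [norm_real, Real.norm_of_nonneg (by positivity)] at h

theorem one_add_div_two_pow_eq_sum (z : ℂ) (N : ℕ) :
    ((1 + z) / 2) ^ N = ∑ a ∈ range (N + 1), (N.choose a / 2 ^ N : ℂ) * z ^ a := by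
  rw [div_pow, add_comm, add_pow, sum_div]
  exact sum_congr rfl fun a _ => by rw [one_pow, mul_one]; ring

theorem prod_exp_I_mul_pow [Fintype ι] (lam : ι → ℝ) (A : ι → ℕ) (x : ℝ) :
    ∏ k, exp (I * lam k * x) ^ A k = exp (I * (∑ k, (A k : ℝ) * lam k : ℝ) * x) := by
  simp only [← exp_nat_mul, ← exp_sum, ofReal_sum, sum_mul, mul_sum]
  exact congrArg exp (sum_congr rfl fun k _ => by push_cast; ring)

theorem prod_one_add_mul_exp_div_two_pow_eq_sum [Fintype ι] [DecidableEq ι]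
    (lam : ι → ℝ) (w : ι → ℂ) (N : ℕ) (x : ℝ) :
    ∏ k, ((1 + w k * exp (I * lam k * x)) / 2) ^ N =
      ∑ A ∈ Fintype.piFinset fun _ => range (N + 1),
        (∏ k, (N.choose (A k) / 2 ^ N : ℂ) * w k ^ A k) *
          exp (I * (∑ k, (A k : ℝ) * lam k : ℝ) * x) := by
  simp only [one_add_div_two_pow_eq_sum]
  rw [prod_univ_sum]
  refine sum_congr rfl fun A _ => ?_
  simp only [mul_pow, ← mul_assoc, prod_mul_distrib, prod_exp_I_mul_pow]

theorem norm_one_add_conj_mul_div_two_sq {t e : ℂ} (ht : ‖t‖ = 1) (he : ‖e‖ = 1) :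
    ‖(1 + conj t * e) / 2‖ ^ 2 = 1 - ‖e - t‖ ^ 2 / 4 := by
  have hpar := parallelogram_law_with_norm ℝ (1 : ℂ) (conj t * e)
  have hsub : ‖1 - conj t * e‖ = ‖e - t‖ := by
    rw [← one_mul ‖1 - conj t * e‖, ← ht, ← norm_mul, mul_sub, mul_one, ← mul_assoc, mul_conj',
      ht, ofReal_one, one_pow, one_mul, norm_sub_rev]
  rw [norm_mul, norm_conj, ht, he, norm_one, hsub] at hpar
  rw [norm_div, RCLike.norm_ofNat]
  nlinarith

theorem injective_sum_nat_mul_of_linearIndependent [Fintype ι] {lam : ι → ℝ}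
    (hlam : LinearIndependent ℚ lam) :
    Function.Injective fun A : ι → ℕ => ∑ k, (A k : ℝ) * lam k := by
  intro A B hAB
  have hdiff : ∑ k, ((A k - B k : ℚ)) • lam k = 0 := by
    simp only [Rat.smul_def, Rat.cast_sub, Rat.cast_natCast, sub_mul, sum_sub_distrib]
    exact sub_eq_zero.mpr hAB
  funext k
  exact_mod_cast sub_eq_zero.mp (Fintype.linearIndependent_iff.mp hlam _ hdiff k)

theorem sum_norm_prod_choose_div_mul_pow_sq [Fintype ι] [DecidableEq ι] {w : ι → ℂ}
    (hw : ∀ k, ‖w k‖ = 1) (N : ℕ) :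
    ∑ A ∈ Fintype.piFinset (fun _ => range (N + 1)),
        ‖∏ k, (N.choose (A k) / 2 ^ N : ℂ) * w k ^ A k‖ ^ 2 =
      (((2 * N).choose N : ℝ) / 4 ^ N) ^ Fintype.card ι := by
  have hA : ∀ A : ι → ℕ, ‖∏ k, (N.choose (A k) / 2 ^ N : ℂ) * w k ^ A k‖ ^ 2 =
      ∏ k, ((N.choose (A k) : ℝ) / 2 ^ N) ^ 2 := fun A => by
    simp only [norm_prod, norm_mul, norm_pow, hw, one_pow, mul_one, ← prod_pow, norm_div,
      Complex.norm_natCast, RCLike.norm_ofNat]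
  have hrow : ∑ a ∈ range (N + 1), ((N.choose a : ℝ) / 2 ^ N) ^ 2 =
      ((2 * N).choose N : ℝ) / 4 ^ N := by
    rw [show (4 : ℝ) ^ N = (2 ^ N) ^ 2 by rw [← pow_mul, mul_comm, pow_mul]; norm_num]
    simp only [div_pow, ← sum_div]
    congr 1
    exact_mod_cast Nat.sum_range_choose_sq N
  rw [sum_congr rfl fun A _ => hA A,
    ← prod_univ_sum (fun _ => range (N + 1)) fun _ a => ((N.choose a : ℝ) / 2 ^ N) ^ 2, hrow,
    prod_const, card_univ]

theorem inv_two_mul_add_one_le_choose_div_four_pow (N : ℕ) :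
    ((2 * N + 1 : ℕ) : ℝ)⁻¹ ≤ ((2 * N).choose N : ℝ) / 4 ^ N := by
  rw [inv_le_iff_one_le_mul₀ (by positivity), div_mul_eq_mul_div, le_div_iff₀ (by positivity),
    one_mul, mul_comm]
  exact_mod_cast Nat.four_pow_le_two_mul_add_one_mul_central_binom N

theorem norm_prod_pow_sq_le {𝕜 : Type*} [NormedField 𝕜] [Fintype ι] {F : ι → 𝕜} {q : ℝ}
    (hF : ∀ k, ‖F k‖ ≤ 1) {k₀ : ι} (hk₀ : ‖F k₀‖ ^ 2 ≤ q) (N : ℕ) :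
    ‖∏ k, F k ^ N‖ ^ 2 ≤ q ^ N := by
  classical
  have hq : 0 ≤ q := (sq_nonneg _).trans hk₀
  calc ‖∏ k, F k ^ N‖ ^ 2 = (‖F k₀‖ ^ 2) ^ N * ∏ k ∈ univ.erase k₀, (‖F k‖ ^ 2) ^ N := by
        rw [mul_prod_erase _ (fun k => (‖F k‖ ^ 2) ^ N) (mem_univ k₀), norm_prod, ← prod_pow]
        exact prod_congr rfl fun k _ => by rw [norm_pow, ← pow_mul, ← pow_mul, mul_comm]
    _ ≤ q ^ N * 1 := by
        gcongr
        exact prod_le_one (fun k _ => by positivity) fun k _ =>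
          pow_le_one₀ (by positivity) (pow_le_one₀ (norm_nonneg _) (hF k))
    _ = q ^ N := mul_one _

theorem exists_two_mul_add_one_pow_mul_pow_lt_one (d : ℕ) {q : ℝ} (hq₀ : 0 ≤ q) (hq₁ : q < 1) :
    ∃ N : ℕ, ((2 * N + 1 : ℕ) : ℝ) ^ d * q ^ N < 1 := by
  have hsmall : Tendsto (fun N : ℕ => 3 ^ d * ((N : ℝ) ^ d * q ^ N)) atTop (𝓝 0) := by
    simpa using (tendsto_pow_const_mul_const_pow_of_lt_one d hq₀ hq₁).const_mul (3 ^ d : ℝ)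
  obtain ⟨N, hN, hN1⟩ :=
    ((hsmall.eventually (gt_mem_nhds one_pos)).and (eventually_ge_atTop 1)).exists
  refine ⟨N, lt_of_le_of_lt ?_ hN⟩
  rw [← mul_assoc, ← mul_pow]
  gcongr
  push_cast
  linarith [(Nat.one_le_cast (α := ℝ)).mpr hN1]

/-- Kronecker's approximation theorem. -/
theorem exists_forall_norm_exp_I_mul_sub_lt [Fintype ι] {lam : ι → ℝ}
    (hlam : LinearIndependent ℚ lam) {t : ι → ℂ} (ht : ∀ k, ‖t k‖ = 1) {ε : ℝ} (hε : 0 < ε) :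
    ∃ x : ℝ, ∀ k, ‖exp (I * lam k * x) - t k‖ < ε := by
  classical
  wlog hε1 : ε ≤ 1 generalizing ε
  · obtain ⟨x, hx⟩ := this one_pos le_rfl
    exact ⟨x, fun k => (hx k).trans (not_le.mp hε1)⟩
  by_contra! hfar
  set q : ℝ := 1 - ε ^ 2 / 4
  have hq₀ : 0 ≤ q := by
    have := pow_le_one₀ hε.le hε1 (n := 2)
    simp only [q]; linarith
  have hq₁ : q < 1 := by simp only [q]; linarith [pow_pos hε 2]
  have hF : ∀ (x : ℝ) k, ‖(1 + conj (t k) * exp (I * lam k * x)) / 2‖ ^ 2 =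
      1 - ‖exp (I * lam k * x) - t k‖ ^ 2 / 4 := fun x k =>
    norm_one_add_conj_mul_div_two_sq (ht k) (norm_exp_I_mul_ofReal_mul _ _)
  have hprod : ∀ (N : ℕ) (x : ℝ),
      ‖∏ k, ((1 + conj (t k) * exp (I * lam k * x)) / 2) ^ N‖ ^ 2 ≤ q ^ N := fun N x => by
    obtain ⟨k₀, hk₀⟩ := hfar x
    refine norm_prod_pow_sq_le (k₀ := k₀) (fun k => ?_) ?_ N
    · refine (sq_le_one_iff₀ (norm_nonneg _)).mp ?_
      rw [hF]; linarith [sq_nonneg ‖exp (I * lam k * x) - t k‖]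
    · rw [hF]; simp only [q]; linarith [pow_le_pow_left₀ hε.le hk₀ 2]
  have hbound : ∀ N : ℕ, 1 ≤ ((2 * N + 1 : ℕ) : ℝ) ^ Fintype.card ι * q ^ N := fun N => by
    have h := sum_norm_sq_le_of_forall_norm_sum_mul_exp_I_mul_sq_le _
      (injective_sum_nat_mul_of_linearIndependent hlam).injOn _ fun x => by
        rw [← prod_one_add_mul_exp_div_two_pow_eq_sum lam (fun k => conj (t k)) N x]
        exact hprod N x
    rw [sum_norm_prod_choose_div_mul_pow_sq (fun k => by rw [norm_conj, ht]) N] at h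
    have := (pow_le_pow_left₀ (by positivity) (inv_two_mul_add_one_le_choose_div_four_pow N)
      (Fintype.card ι)).trans h
    rwa [inv_pow, inv_le_iff_one_le_mul₀ (by positivity), mul_comm] at this
  obtain ⟨N, hN⟩ := exists_two_mul_add_one_pow_mul_pow_lt_one (Fintype.card ι) hq₀ hq₁
  exact (hbound N).not_gt hN

theorem exists_norm_mul_add_eq {p v : ℝ} (hp : 0 ≤ p) (w : ℂ) (h₁ : |p - ‖w‖| ≤ v)
    (h₂ : v ≤ p + ‖w‖) : ∃ z : ℂ, ‖z‖ = 1 ∧ ‖p * z + w‖ = v := by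
  set h : ℝ → ℝ := fun θ => ‖p * exp (θ * I) + ‖w‖‖
  have hcont : Continuous h := by fun_prop
  have h0 : h 0 = p + ‖w‖ := by
    simp only [h, ofReal_zero, zero_mul, exp_zero, mul_one, ← ofReal_add, norm_real,
      Real.norm_of_nonneg (add_nonneg hp (norm_nonneg w))]
  have hπ : h Real.pi = |p - ‖w‖| := by
    simp only [h, exp_pi_mul_I, mul_neg_one, neg_add_eq_sub, ← ofReal_sub, norm_real,
      Real.norm_eq_abs, abs_sub_comm]
  obtain ⟨θ, -, hθ⟩ := intermediate_value_Icc' Real.pi_pos.le hcont.continuousOn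
    (show v ∈ Set.Icc (h Real.pi) (h 0) by rw [h0, hπ]; exact ⟨h₁, h₂⟩)
  refine ⟨exp (θ * I) * exp (arg w * I), by simp [norm_exp_ofReal_mul_I], ?_⟩
  have hw : (p : ℂ) * (exp (θ * I) * exp (arg w * I)) + w =
      (p * exp (θ * I) + ‖w‖) * exp (arg w * I) := by
    rw [add_mul, norm_mul_exp_arg_mul_I]; ring
  rw [hw, norm_mul, norm_exp_ofReal_mul_I, mul_one]
  exact hθ

theorem exists_norm_sum_mul_eq {a : ι → ℝ} (ha : ∀ k, 0 ≤ a k) (s : Finset ι)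
    {v : ℝ} (hv : 0 ≤ v) (hmax : ∀ k ∈ s, a k ≤ v) (hsum : v ≤ ∑ k ∈ s, a k) :
    ∃ z : ι → ℂ, (∀ k, ‖z k‖ = 1) ∧ ‖∑ k ∈ s, a k * z k‖ = v := by
  classical
  induction s using Finset.induction_on generalizing v with
  | empty =>
    exact ⟨fun _ => 1, fun _ => norm_one, by simpa using (le_antisymm hsum hv).symm⟩
  | @insert b s hb ih =>
    rw [sum_insert hb] at hsum
    have hs : 0 ≤ ∑ k ∈ s, a k := sum_nonneg fun k _ => ha k
    have hb_le : a b ≤ v := hmax b (mem_insert_self b s)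
    obtain ⟨z, hz, hzs⟩ := ih (le_min hv hs)
      (fun k hk => le_min (hmax k (mem_insert_of_mem hk)) (single_le_sum (fun k _ => ha k) hk))
      (min_le_right _ _)
    have h₁ : |a b - min v (∑ k ∈ s, a k)| ≤ v := abs_le.mpr
      ⟨by linarith [min_le_left v (∑ k ∈ s, a k), ha b], by linarith [le_min hv hs]⟩
    have h₂ : v ≤ a b + min v (∑ k ∈ s, a k) := by
      rcases min_cases v (∑ k ∈ s, a k) with ⟨h, -⟩ | ⟨h, -⟩ <;> rw [h] <;> linarith [ha b]
    obtain ⟨zb, hzb, hzbs⟩ :=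
      exists_norm_mul_add_eq (ha b) (∑ k ∈ s, a k * z k) (hzs ▸ h₁) (hzs ▸ h₂)
    refine ⟨Function.update z b zb, fun k => ?_, ?_⟩
    · rcases eq_or_ne k b with rfl | hk
      · rwa [Function.update_self]
      · rw [Function.update_of_ne hk, hz]
    · rw [sum_insert hb, Function.update_self,
        sum_congr rfl fun k hk => by rw [Function.update_of_ne (ne_of_mem_of_not_mem hk hb)]]
      exact hzbs

theorem exists_sum_mul_eq_zero [Fintype ι] {a : ι → ℝ} (ha : ∀ k, 0 ≤ a k)
    (hle : ∀ j, 2 * a j ≤ ∑ k, a k) : ∃ z : ι → ℂ, (∀ k, ‖z k‖ = 1) ∧ ∑ k, a k * z k = 0 := by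
  classical
  rcases isEmpty_or_nonempty ι with _ | _
  · exact ⟨fun _ => 1, fun _ => norm_one, by simp⟩
  obtain ⟨j, hj⟩ := Finite.exists_max a
  obtain ⟨z, hz, hzs⟩ := exists_norm_sum_mul_eq ha (univ.erase j) (ha j) (fun k _ => hj k)
    (by linarith [hle j, sum_erase_add univ a (mem_univ j)])
  obtain ⟨zj, hzj, hzjs⟩ := exists_norm_mul_add_eq (v := 0) (ha j)
    (∑ k ∈ univ.erase j, a k * z k) (by rw [hzs, sub_self, abs_zero]) (by rw [hzs]; linarith [ha j])
  refine ⟨Function.update z j zj, fun k => ?_, ?_⟩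
  · rcases eq_or_ne k j with rfl | hk
    · rwa [Function.update_self]
    · rw [Function.update_of_ne hk, hz]
  · rw [← add_sum_erase univ _ (mem_univ j), Function.update_self,
      sum_congr rfl fun k hk => by rw [Function.update_of_ne (ne_of_mem_erase hk)]]
    exact norm_eq_zero.mp hzjs

theorem exists_norm_sum_mul_exp_I_mul_lt [Fintype ι] {lam : ι → ℝ}
    (hlam : LinearIndependent ℚ lam) {c : ι → ℂ} (hc : ∀ j, 2 * ‖c j‖ ≤ ∑ k, ‖c k‖) {δ : ℝ}
    (hδ : 0 < δ) : ∃ x : ℝ, ‖∑ k, c k * exp (I * lam k * x)‖ < δ := by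
  obtain ⟨z, hz, hz0⟩ := exists_sum_mul_eq_zero (fun k => norm_nonneg (c k)) hc
  set S := ∑ k, ‖c k‖
  have hS : 0 ≤ S := sum_nonneg fun k _ => norm_nonneg (c k)
  set t : ι → ℂ := fun k => z k * exp (↑(-arg (c k)) * I)
  have ht : ∀ k, ‖t k‖ = 1 := fun k => by
    rw [norm_mul, hz, norm_exp_ofReal_mul_I, mul_one]
  have hct : ∑ k, c k * t k = 0 := by
    rw [← hz0]
    refine sum_congr rfl fun k _ => ?_
    simp only [t]
    nth_rw 1 [← norm_mul_exp_arg_mul_I (c k)]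
    calc _ = ‖c k‖ * z k * exp (arg (c k) * I + ↑(-arg (c k)) * I) := by rw [exp_add]; ring
      _ = ‖c k‖ * z k := by rw [ofReal_neg, neg_mul, add_neg_cancel, exp_zero, mul_one]
  obtain ⟨x, hx⟩ :=
    exists_forall_norm_exp_I_mul_sub_lt hlam ht (div_pos hδ (by linarith : 0 < S + 1))
  refine ⟨x, ?_⟩
  calc ‖∑ k, c k * exp (I * lam k * x)‖ = ‖∑ k, c k * (exp (I * lam k * x) - t k)‖ := by
        simp only [mul_sub, sum_sub_distrib, hct, sub_zero]
    _ ≤ ∑ k, ‖c k‖ * (δ / (S + 1)) := by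
        refine (norm_sum_le _ _).trans (sum_le_sum fun k _ => ?_)
        rw [norm_mul]
        exact mul_le_mul_of_nonneg_left (hx k).le (norm_nonneg _)
    _ < δ := by
        rw [← sum_mul, mul_div_assoc', div_lt_iff₀ (by linarith)]
        nlinarith

theorem two_mul_norm_sub_sum_norm_le_norm_sum {E : Type*} [Fintype ι] [SeminormedAddCommGroup E]
    (v : ι → E) (j : ι) : 2 * ‖v j‖ - ∑ k, ‖v k‖ ≤ ‖∑ k, v k‖ := by
  classical
  rw [← add_sum_erase univ v (mem_univ j), ← add_sum_erase univ _ (mem_univ j)]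
  have := norm_sum_le (univ.erase j) v
  have := norm_sub_norm_le (v j) (-∑ k ∈ univ.erase j, v k)
  rw [sub_neg_eq_add, norm_neg] at this
  linarith

theorem abs_two_mul_sub_sum_mem_partitionValues {n : ℕ} (a : Fin n → ℝ) (j : Fin n) :
    |2 * a j - ∑ k, a k| ∈ partitionValues n a := by
  refine ⟨fun k => if k = j then 1 else -1, fun k => by dsimp only; split_ifs <;> simp, ?_⟩
  have hsign : ∀ k, (if k = j then 1 else -1) * a k = 2 * (if k = j then a k else 0) - a k :=
    fun k => by split_ifs <;> ring
  simp only [hsign, sum_sub_distrib, ← mul_sum, sum_ite_eq', mem_univ, if_true]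

end

theorem stmt_5 (n : ℕ) (lam : Fin n → ℝ) (c : Fin n → ℂ)
    (hindep : ∀ r : Fin n → ℚ, (∑ k, (r k : ℝ) * lam k) = 0 → ∀ k, r k = 0)
    (f : ℝ → ℂ)
    (hf : ∀ x : ℝ, f x = ∑ k, c k * Complex.exp (Complex.I * (lam k : ℂ) * (x : ℂ)))
    (r : ℝ) (hr : r = ⨅ x : ℝ, ‖f x‖) (hrpos : 0 < r) :
    sInf (partitionValues n fun k => ‖c k‖) ≤ r := by
  have hlam : LinearIndependent ℚ lam :=
    Fintype.linearIndependent_iff.mpr fun g hg => hindep g (by simpa only [Rat.smul_def] using hg)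
  by_cases hdom : ∃ j, ∑ k, ‖c k‖ ≤ 2 * ‖c j‖
  · obtain ⟨j, hj⟩ := hdom
    have hmem := abs_two_mul_sub_sum_mem_partitionValues (fun k => ‖c k‖) j
    rw [abs_of_nonneg (by linarith)] at hmem
    have hbdd : BddBelow (partitionValues n fun k => ‖c k‖) :=
      ⟨0, fun _ ⟨_, _, hm⟩ => hm ▸ abs_nonneg _⟩
    refine (csInf_le hbdd hmem).trans (hr ▸ le_ciInf fun x => ?_)
    simpa [hf x, norm_mul, norm_exp_I_mul_ofReal_mul] using
      two_mul_norm_sub_sum_norm_le_norm_sum (fun k => c k * exp (I * lam k * x)) j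
  · simp only [not_exists, not_le] at hdom
    obtain ⟨x, hx⟩ := exists_norm_sum_mul_exp_I_mul_lt hlam (fun j => (hdom j).le) hrpos
    have hbdd : BddBelow (Set.range fun x => ‖f x‖) := ⟨0, by rintro _ ⟨x, rfl⟩; positivity⟩
    exact absurd (hr ▸ ciInf_le hbdd x) (not_le.mpr (hf x ▸ hx))
end
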